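/- Let A be a self-adjoint (possibly unbounded) operator on a Hilbert space H and let U(t) = e^{itA}, t ∈ ℝ, be the corresponding strongly continuous one-parameter group of unitary operators. For k ∈ ℤ_{≥0} let H^k denote the domain of A^k, and H^∞ = ⋂_{k∈ℤ_{≥0}} H^k. If there exist a real number ε > 0 and two dense linear subspaces 𝒟_ε and 𝒟 of H^∞ such that U(t)𝒟_ε ⊆ 𝒟 for every t ∈ (−ε, ε), then for every positive integer k, 𝒟 is a core for A^k. -/

import Mathlib

/-!
STATEMENT 19 (Lemma 6.2 / `lb15`, cf. [CKLW] Lemma 7.2):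
Let `A` be a self-adjoint operator on a Hilbert space `H` and `U(t) = e^{itA}` the
corresponding strongly continuous one-parameter unitary group.  If there are `ε > 0`
and dense linear subspaces `𝒟_ε, 𝒟 ⊆ H^∞` with `U(t)𝒟_ε ⊆ 𝒟` for `t ∈ (−ε, ε)`,
then `𝒟` is a core for `A^k` for every positive integer `k`.
-/

noncomputable section
open scoped InnerProductSpace

variable {H : Type*} [NormedAddCommGroup H] [InnerProductSpace ℂ H] [CompleteSpace H]

/-- `IterGraph A k ξ η` means that `ξ` lies in the domain of `A^k` and `A^k ξ = η`. -/
def IterGraph (A : H →ₗ.[ℂ] H) : ℕ → H → H → Prop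
  | 0 => fun ξ η => ξ = η
  | k + 1 => fun ξ η => ∃ h : ξ ∈ A.domain, IterGraph A k (A ⟨ξ, h⟩) η

/-- The space `H^k`: the domain of `A^k`. -/
def inIterDom (A : H →ₗ.[ℂ] H) (k : ℕ) (ξ : H) : Prop := ∃ η, IterGraph A k ξ η

/-- The space `H^∞ = ⋂_k H^k` of smooth vectors of `A`. -/
def smoothVecs (A : H →ₗ.[ℂ] H) : Set H := {ξ | ∀ k : ℕ, inIterDom A k ξ}

open Complex MeasureTheory Filter Topology
open scoped ContDiff
set_option linter.unusedSectionVars false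
set_option linter.unusedVariables false

namespace S19

variable (A : H →ₗ.[ℂ] H)

lemma iterGraph_unique : ∀ (k : ℕ) {ξ η η' : H}, IterGraph A k ξ η → IterGraph A k ξ η' → η = η'
  | 0, ξ, η, η', h, h' => h.symm.trans h'
  | k + 1, ξ, η, η', ⟨hd, h⟩, ⟨hd', h'⟩ => iterGraph_unique k h h'

lemma iterGraph_zero : ∀ k : ℕ, IterGraph A k 0 0
  | 0 => rfl
  | k + 1 => by
      refine ⟨A.domain.zero_mem, ?_⟩
      have : A ⟨0, A.domain.zero_mem⟩ = 0 := by
        have : (⟨0, A.domain.zero_mem⟩ : A.domain) = 0 := rfl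
        rw [this, A.map_zero]
      rw [this]; exact iterGraph_zero k

lemma iterGraph_add : ∀ (k : ℕ) {ξ η ξ' η' : H}, IterGraph A k ξ η → IterGraph A k ξ' η' →
    IterGraph A k (ξ + ξ') (η + η')
  | 0, ξ, η, ξ', η', h, h' => by simp only [IterGraph] at *; rw [h, h']
  | k + 1, ξ, η, ξ', η', ⟨hd, h⟩, ⟨hd', h'⟩ => by
      refine ⟨A.domain.add_mem hd hd', ?_⟩
      have : A ⟨ξ + ξ', A.domain.add_mem hd hd'⟩ = A ⟨ξ, hd⟩ + A ⟨ξ', hd'⟩ := by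
        have : (⟨ξ + ξ', A.domain.add_mem hd hd'⟩ : A.domain) = ⟨ξ, hd⟩ + ⟨ξ', hd'⟩ := rfl
        rw [this, A.map_add]
      rw [this]; exact iterGraph_add k h h'

lemma iterGraph_smul : ∀ (k : ℕ) (c : ℂ) {ξ η : H}, IterGraph A k ξ η →
    IterGraph A k (c • ξ) (c • η)
  | 0, c, ξ, η, h => by simp only [IterGraph] at *; rw [h]
  | k + 1, c, ξ, η, ⟨hd, h⟩ => by
      refine ⟨A.domain.smul_mem c hd, ?_⟩
      have : A ⟨c • ξ, A.domain.smul_mem c hd⟩ = c • A ⟨ξ, hd⟩ := by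
        have : (⟨c • ξ, A.domain.smul_mem c hd⟩ : A.domain) = c • ⟨ξ, hd⟩ := rfl
        rw [this, A.map_smul]
      rw [this]; exact iterGraph_smul k c h

lemma iterGraph_sub (k : ℕ) {ξ η ξ' η' : H} (h : IterGraph A k ξ η) (h' : IterGraph A k ξ' η') :
    IterGraph A k (ξ - ξ') (η - η') := by
  have := iterGraph_add A k h (iterGraph_smul A k (-1) h')
  simpa [sub_eq_add_neg] using this

/-- Symmetry of a self-adjoint `A`. -/
lemma symm (hdense : Dense (A.domain : Set H)) (hsa : A.adjoint = A)
    (x y : A.domain) : ⟪A x, (y : H)⟫_ℂ = ⟪(x : H), A y⟫_ℂ := by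
  have h := A.adjoint_isFormalAdjoint (hT := hdense)
  rw [hsa] at h
  exact h x y

/-- `A` is closed. -/
lemma a_closed (hdense : Dense (A.domain : Set H)) (hsa : A.adjoint = A)
    {x : ℕ → H} (hx : ∀ n, x n ∈ A.domain) {y : ℕ → H} (hy : ∀ n, A ⟨x n, hx n⟩ = y n)
    {ξ η : H} (hxl : Tendsto x atTop (𝓝 ξ)) (hyl : Tendsto y atTop (𝓝 η)) :
    ∃ h : ξ ∈ A.domain, A ⟨ξ, h⟩ = η := by
  have key : ∀ v : A.domain, ⟪η, (v : H)⟫_ℂ = ⟪ξ, A v⟫_ℂ := by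
    intro v
    have h1 : Tendsto (fun n => ⟪y n, (v : H)⟫_ℂ) atTop (𝓝 ⟪η, (v : H)⟫_ℂ) :=
      (Continuous.tendsto (continuous_inner.comp (Continuous.prodMk continuous_id continuous_const)) η).comp hyl |>.congr (fun n => rfl)
    have h2 : Tendsto (fun n => ⟪x n, A v⟫_ℂ) atTop (𝓝 ⟪ξ, A v⟫_ℂ) :=
      (Continuous.tendsto (continuous_inner.comp (Continuous.prodMk continuous_id continuous_const)) ξ).comp hxl |>.congr (fun n => rfl)
    have heq : (fun n => ⟪y n, (v : H)⟫_ℂ) = fun n => ⟪x n, A v⟫_ℂ := by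
      funext n
      rw [← hy n]
      exact symm A hdense hsa _ v
    rw [heq] at h1
    exact tendsto_nhds_unique h1 h2
  rw [← hsa]
  have hmem : ξ ∈ A.adjoint.domain :=
    LinearPMap.mem_adjoint_domain_of_exists _ ⟨η, fun v => key v⟩
  exact ⟨hmem, A.adjoint_apply_eq hdense ⟨ξ, hmem⟩ (fun v => key v)⟩



/-- real lemma: log-convex sequences attain max at endpoints -/
lemma max_endpoint {k : ℕ} (a : ℕ → ℝ) (h0 : ∀ i, 0 ≤ a i)
    (hsq : ∀ i, 0 < i → i < k → a i ^ 2 ≤ a (i - 1) * a (i + 1)) :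
    ∀ j ≤ k, a j ≤ max (a 0) (a k) := by
  classical
  have hex : ∃ n, n ≤ k ∧ ∀ i ≤ k, a i ≤ a n := by
    obtain ⟨n, hn, hmax⟩ := Finset.exists_max_image (Finset.range (k+1)) a ⟨0, by simp⟩
    exact ⟨n, Nat.lt_succ_iff.mp (Finset.mem_range.mp hn),
      fun i hi => hmax i (Finset.mem_range.mpr (Nat.lt_succ_iff.mpr hi))⟩
  set j := Nat.find hex with hjdef
  obtain ⟨hjk, hjmax⟩ : j ≤ k ∧ ∀ i ≤ k, a i ≤ a j := Nat.find_spec hex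
  suffices hj : a j ≤ max (a 0) (a k) by
    intro i hi; exact le_trans (hjmax i hi) hj
  rcases Nat.eq_zero_or_pos j with h0j | h0j
  · rw [h0j]; exact le_max_left _ _
  rcases eq_or_lt_of_le hjk with hjk' | hjk'
  · rw [hjk']; exact le_max_right _ _
  -- interior maximizer
  exfalso
  rcases le_or_gt (a j) 0 with haj | haj
  · -- a j = 0, so all a i = 0; but then j is not minimal (0 works)
    have : ∀ i ≤ k, a i ≤ a 0 := by
      intro i hi
      have := le_antisymm haj (h0 j)
      have h2 := hjmax i hi
      rw [this] at h2
      exact le_trans h2 (h0 0)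
    have h9 : j ≤ 0 := Nat.find_le ⟨Nat.zero_le _, this⟩
    omega
  · have hs := hsq j h0j hjk'
    have h1 : a j * a j ≤ a (j - 1) * a j := by
      calc a j * a j = a j ^ 2 := (sq (a j)).symm
        _ ≤ a (j - 1) * a (j + 1) := hs
        _ ≤ a (j - 1) * a j := by
            exact mul_le_mul_of_nonneg_left (hjmax (j+1) (by omega)) (h0 _)
    have h2 : a j ≤ a (j - 1) := le_of_mul_le_mul_right h1 haj
    have h3 : a (j - 1) ≤ a j := hjmax (j-1) (by omega)
    have heq : a (j - 1) = a j := le_antisymm h3 h2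
    -- then j - 1 also satisfies the property, contradicting minimality
    have : ∀ i ≤ k, a i ≤ a (j - 1) := by rw [heq]; exact hjmax
    have h9 : j ≤ j - 1 := Nat.find_le ⟨by omega, this⟩
    omega


end S19

namespace S19
variable (A : H →ₗ.[ℂ] H)

/-- every `IterGraph` gives a chain. -/
lemma iterGraph_chain : ∀ (k : ℕ) {ξ η : H}, IterGraph A k ξ η →
    ∃ c : ℕ → H, c 0 = ξ ∧ c k = η ∧ ∀ i < k, ∃ h : c i ∈ A.domain, A ⟨c i, h⟩ = c (i + 1)
  | 0, ξ, η, h => ⟨fun _ => ξ, rfl, h ▸ rfl, fun i hi => absurd hi (Nat.not_lt_zero i)⟩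
  | k + 1, ξ, η, ⟨hd, h⟩ => by
      obtain ⟨c', hc0, hck, hc⟩ := iterGraph_chain k h
      refine ⟨fun i => Nat.rec ξ (fun i _ => c' i) i, rfl, hck, ?_⟩
      intro i hi
      cases i with
      | zero => exact ⟨hd, hc0.symm⟩
      | succ i => exact hc i (by omega)

lemma chain_iterGraph : ∀ (k : ℕ) (c : ℕ → H),
    (∀ i < k, ∃ h : c i ∈ A.domain, A ⟨c i, h⟩ = c (i + 1)) → IterGraph A k (c 0) (c k)
  | 0, c, _ => rfl
  | k + 1, c, hc => by
      obtain ⟨hd, hval⟩ := hc 0 (Nat.succ_pos k)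
      refine ⟨hd, ?_⟩
      rw [hval]
      have := chain_iterGraph k (fun i => c (i + 1)) (fun i hi => hc (i + 1) (by omega))
      exact this

/-- interior norm bound of a chain, from symmetry of `A`. -/
lemma chain_sq (hdense : Dense (A.domain : Set H)) (hsa : A.adjoint = A)
    {x y z : H} (hx : x ∈ A.domain) (hxy : A ⟨x, hx⟩ = y) (hy : y ∈ A.domain)
    (hyz : A ⟨y, hy⟩ = z) : ‖y‖ ^ 2 ≤ ‖x‖ * ‖z‖ := by
  subst hxy; subst hyz
  have h1 : (⟪A ⟨x, hx⟩, A ⟨x, hx⟩⟫_ℂ : ℂ) = ⟪x, A ⟨A ⟨x, hx⟩, hy⟩⟫_ℂ :=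
    symm A hdense hsa ⟨x, hx⟩ ⟨A ⟨x, hx⟩, hy⟩
  have h2 : (‖A ⟨x, hx⟩‖ : ℝ) ^ 2 = RCLike.re (⟪A ⟨x, hx⟩, A ⟨x, hx⟩⟫_ℂ : ℂ) :=
    (inner_self_eq_norm_sq (𝕜 := ℂ) _).symm
  rw [h2, h1]
  calc RCLike.re (⟪x, A ⟨A ⟨x, hx⟩, hy⟩⟫_ℂ : ℂ) ≤ ‖(⟪x, A ⟨A ⟨x, hx⟩, hy⟩⟫_ℂ : ℂ)‖ :=
        RCLike.re_le_norm _
    _ ≤ ‖x‖ * ‖A ⟨A ⟨x, hx⟩, hy⟩‖ := norm_inner_le_norm x _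

/-- closedness of the graph of `A^k` (sequential form). -/
lemma iterGraph_seq_closed (hdense : Dense (A.domain : Set H)) (hsa : A.adjoint = A) :
    ∀ (k : ℕ) {x y : ℕ → H} {ξ η : H}, (∀ n, IterGraph A k (x n) (y n)) →
      Tendsto x atTop (𝓝 ξ) → Tendsto y atTop (𝓝 η) → IterGraph A k ξ η
  | 0, x, y, ξ, η, hg, hx, hy => by
      have : x = y := funext fun n => hg n
      rw [this] at hx
      exact tendsto_nhds_unique hx hy
  | k + 1, x, y, ξ, η, hg, hx, hy => by
      have hd : ∀ n, x n ∈ A.domain := fun n => (hg n).1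
      set z : ℕ → H := fun n => A ⟨x n, hd n⟩ with hzdef
      have hgz : ∀ n, IterGraph A k (z n) (y n) := fun n => (hg n).2
      -- z is Cauchy
      have hbound : ∀ n m, ‖z n - z m‖ ≤ max ‖x n - x m‖ ‖y n - y m‖ := by
        intro n m
        have hsub : IterGraph A (k + 1) (x n - x m) (y n - y m) :=
          iterGraph_sub A (k + 1) (hg n) (hg m)
        obtain ⟨c, hc0, hck, hc⟩ := iterGraph_chain A (k + 1) hsub
        have hz1 : c 1 = z n - z m := by
          obtain ⟨h0, h0v⟩ := hc 0 (Nat.succ_pos k)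
          rw [← h0v]
          have hmem : (⟨c 0, h0⟩ : A.domain) = ⟨x n, hd n⟩ - ⟨x m, hd m⟩ := by
            apply Subtype.ext; simp [hc0]
          rw [hmem, A.map_sub]
        have hs : ∀ i, 0 < i → i < k + 1 → ‖c i‖ ^ 2 ≤ ‖c (i - 1)‖ * ‖c (i + 1)‖ := by
          intro i h0i hik
          obtain ⟨i, rfl⟩ : ∃ i', i = i' + 1 := ⟨i - 1, by omega⟩
          simp only [Nat.add_sub_cancel]
          obtain ⟨ha, hav⟩ := hc i (by omega)
          obtain ⟨hb, hbv⟩ := hc (i + 1) (by omega)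
          exact chain_sq A hdense hsa ha hav hb hbv
        have hmax : ‖c 1‖ ≤ max ‖c 0‖ ‖c (k + 1)‖ :=
          max_endpoint (fun i => ‖c i‖) (fun i => norm_nonneg _) hs 1 (by omega)
        calc ‖z n - z m‖ = ‖c 1‖ := by rw [hz1]
          _ ≤ max ‖c 0‖ ‖c (k + 1)‖ := hmax
          _ = max ‖x n - x m‖ ‖y n - y m‖ := by rw [hc0, hck]
      have hcz : CauchySeq z := by
        rw [Metric.cauchySeq_iff]
        intro r hr
        obtain ⟨N1, hN1⟩ := (Metric.cauchySeq_iff.mp hx.cauchySeq) r hr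
        obtain ⟨N2, hN2⟩ := (Metric.cauchySeq_iff.mp hy.cauchySeq) r hr
        refine ⟨max N1 N2, fun n hn m hm => ?_⟩
        have h1 := hN1 n (le_trans (le_max_left _ _) hn) m (le_trans (le_max_left _ _) hm)
        have h2 := hN2 n (le_trans (le_max_right _ _) hn) m (le_trans (le_max_right _ _) hm)
        rw [dist_eq_norm] at *
        exact lt_of_le_of_lt (hbound n m) (max_lt h1 h2)
      obtain ⟨ζ, hζ⟩ := cauchySeq_tendsto_of_complete hcz
      obtain ⟨hξd, hξv⟩ := a_closed A hdense hsa hd (fun n => rfl) hx hζ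
      refine ⟨hξd, ?_⟩
      rw [hξv]
      exact iterGraph_seq_closed hdense hsa k hgz hζ hy

lemma iterGraph_isClosed (hdense : Dense (A.domain : Set H)) (hsa : A.adjoint = A) (k : ℕ) :
    IsClosed {p : H × H | IterGraph A k p.1 p.2} := by
  apply IsSeqClosed.isClosed
  intro p q hp hq
  exact iterGraph_seq_closed A hdense hsa k (fun n => hp n)
    ((continuous_fst.tendsto q).comp hq) ((continuous_snd.tendsto q).comp hq)

end S19

namespace S19
variable (A : H →ₗ.[ℂ] H) (U : ℝ → (H →L[ℂ] H))

lemma unorm (hUunit : ∀ (t : ℝ) (ξ η : H), ⟪U t ξ, U t η⟫_ℂ = ⟪ξ, η⟫_ℂ) (t : ℝ) (x : H) :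
    ‖U t x‖ = ‖x‖ := by
  have h := hUunit t x x
  have h1 : (‖U t x‖ : ℝ) ^ 2 = ‖x‖ ^ 2 := by
    rw [← inner_self_eq_norm_sq (𝕜 := ℂ) (U t x), ← inner_self_eq_norm_sq (𝕜 := ℂ) x, h]
  rw [← Real.sqrt_sq (norm_nonneg (U t x)), h1, Real.sqrt_sq (norm_nonneg x)]

/-- `U s` maps the domain of `A` into itself and commutes with `A`. -/
lemma clm_deriv (L : H →L[ℂ] H) {f : ℝ → H} {d : H} {t : ℝ} (h : HasDerivAt f d t) :
    HasDerivAt (fun s => L (f s)) (L d) t :=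
  HasFDerivAt.comp_hasDerivAt t ((L.restrictScalars ℝ).hasFDerivAt) h

lemma ucomm (hUgrp : ∀ s t : ℝ, U (s + t) = (U s).comp (U t))
    (hgen : ∀ (ξ : H) (hξ : ξ ∈ A.domain),
      HasDerivAt (fun t : ℝ => U t ξ) (Complex.I • A ⟨ξ, hξ⟩) 0)
    (hgen' : ∀ ξ : H, (∃ d : H, HasDerivAt (fun t : ℝ => U t ξ) d 0) → ξ ∈ A.domain)
    (s : ℝ) {ξ : H} (hξ : ξ ∈ A.domain) :
    ∃ h : U s ξ ∈ A.domain, A ⟨U s ξ, h⟩ = U s (A ⟨ξ, hξ⟩) := by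
  have heq : (fun t : ℝ => U t (U s ξ)) = fun t : ℝ => U s (U t ξ) := by
    funext t
    have h1 : U (t + s) ξ = U t (U s ξ) := by rw [hUgrp t s]; rfl
    have h2 : U (s + t) ξ = U s (U t ξ) := by rw [hUgrp s t]; rfl
    rw [← h1, ← h2, add_comm]
  have hder : HasDerivAt (fun t : ℝ => U t (U s ξ)) (U s (Complex.I • A ⟨ξ, hξ⟩)) 0 := by
    rw [heq]
    exact clm_deriv (U s) (hgen ξ hξ)
  have hdom : U s ξ ∈ A.domain := hgen' _ ⟨_, hder⟩
  refine ⟨hdom, ?_⟩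
  have hder2 := hgen (U s ξ) hdom
  have huniq := hder2.unique hder
  have : Complex.I • A ⟨U s ξ, hdom⟩ = Complex.I • U s (A ⟨ξ, hξ⟩) := by
    rw [huniq, (U s).map_smul]
  have hI : (Complex.I : ℂ) ≠ 0 := Complex.I_ne_zero
  exact smul_right_injective H hI this

/-- iterated commutation. -/
lemma ucomm_iter (hUgrp : ∀ s t : ℝ, U (s + t) = (U s).comp (U t))
    (hgen : ∀ (ξ : H) (hξ : ξ ∈ A.domain),
      HasDerivAt (fun t : ℝ => U t ξ) (Complex.I • A ⟨ξ, hξ⟩) 0)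
    (hgen' : ∀ ξ : H, (∃ d : H, HasDerivAt (fun t : ℝ => U t ξ) d 0) → ξ ∈ A.domain)
    (s : ℝ) : ∀ (k : ℕ) {ξ η : H}, IterGraph A k ξ η → IterGraph A k (U s ξ) (U s η)
  | 0, ξ, η, h => congrArg (U s) h
  | k + 1, ξ, η, ⟨hd, h⟩ => by
      obtain ⟨hdom, hval⟩ := ucomm A U hUgrp hgen hgen' s hd
      exact ⟨hdom, hval ▸ ucomm_iter hUgrp hgen hgen' s k h⟩

/-- derivative of the orbit at an arbitrary time. -/
lemma uderiv (hUgrp : ∀ s t : ℝ, U (s + t) = (U s).comp (U t))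
    (hgen : ∀ (ξ : H) (hξ : ξ ∈ A.domain),
      HasDerivAt (fun t : ℝ => U t ξ) (Complex.I • A ⟨ξ, hξ⟩) 0)
    (hgen' : ∀ ξ : H, (∃ d : H, HasDerivAt (fun t : ℝ => U t ξ) d 0) → ξ ∈ A.domain)
    (t : ℝ) {ξ : H} (hξ : ξ ∈ A.domain) :
    HasDerivAt (fun s : ℝ => U s ξ) (Complex.I • U t (A ⟨ξ, hξ⟩)) t := by
  obtain ⟨hdom, hval⟩ := ucomm A U hUgrp hgen hgen' t hξ
  have hG : HasDerivAt (fun r : ℝ => U r (U t ξ)) (Complex.I • A ⟨U t ξ, hdom⟩) 0 :=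
    hgen (U t ξ) hdom
  have hcomp : HasDerivAt (fun s : ℝ => U (s - t) (U t ξ))
      ((1 : ℝ) • (Complex.I • A ⟨U t ξ, hdom⟩)) t := by
    exact HasDerivAt.scomp t (by simpa using hG) ((hasDerivAt_id t).sub_const t)
  have heq : (fun s : ℝ => U (s - t) (U t ξ)) = fun s : ℝ => U s ξ := by
    funext s
    have : U (s - t + t) ξ = U (s - t) (U t ξ) := by rw [hUgrp (s - t) t]; rfl
    rw [← this, sub_add_cancel]
  rw [heq] at hcomp
  simpa [hval] using hcomp

end S19

namespace S19
variable (A : H →ₗ.[ℂ] H) (U : ℝ → (H →L[ℂ] H))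

/-- integral pair of `M`-valued function lies in the closure of `M`. -/
lemma pair_mem_closure (M : Submodule ℂ (H × H)) {g h : ℝ → H} (hg : Continuous g)
    (hh : Continuous h) {a b : ℝ}
    (hmem : ∀ t ∈ Set.uIcc a b, (g t, h t) ∈ M) :
    ((∫ t in a..b, g t), (∫ t in a..b, h t)) ∈ closure (M : Set (H × H)) := by
  set E2 := WithLp 2 (H × H)
  set e : E2 ≃L[ℂ] H × H := WithLp.prodContinuousLinearEquiv 2 ℂ H H with he
  set M' : Submodule ℂ E2 := M.comap e.toLinearEquiv.toLinearMap with hM'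
  set p : H × H := ((∫ t in a..b, g t), (∫ t in a..b, h t)) with hp
  have hint_g : IntervalIntegrable g MeasureTheory.volume a b := hg.intervalIntegrable a b
  have hint_h : IntervalIntegrable h MeasureTheory.volume a b := hh.intervalIntegrable a b
  have hq : e.symm p ∈ closure (M' : Set E2) := by
    rw [← Submodule.topologicalClosure_coe, ← Submodule.orthogonal_orthogonal_eq_closure,
      SetLike.mem_coe, Submodule.mem_orthogonal]
    intro y hy
    have hcomp : (⟪y, e.symm p⟫_ℂ : ℂ)
        = ⟪y.fst, ∫ t in a..b, g t⟫_ℂ + ⟪y.snd, ∫ t in a..b, h t⟫_ℂ := rfl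
    have hgcomm : (⟪y.fst, ∫ t in a..b, g t⟫_ℂ : ℂ) = ∫ t in a..b, ⟪y.fst, g t⟫_ℂ :=
      ((innerSL ℂ y.fst).intervalIntegral_comp_comm hint_g).symm
    have hhcomm : (⟪y.snd, ∫ t in a..b, h t⟫_ℂ : ℂ) = ∫ t in a..b, ⟪y.snd, h t⟫_ℂ :=
      ((innerSL ℂ y.snd).intervalIntegral_comp_comm hint_h).symm
    have hpt : ∀ t ∈ Set.uIcc a b, (⟪y.fst, g t⟫_ℂ : ℂ) + ⟪y.snd, h t⟫_ℂ = 0 := by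
      intro t ht
      have hm : e.symm (g t, h t) ∈ M' := by
        simp only [hM', Submodule.mem_comap]
        have : e.toLinearEquiv.toLinearMap (e.symm (g t, h t)) = (g t, h t) := by
          simp
        rw [this]
        exact hmem t ht
      have := (Submodule.mem_orthogonal' M' y).mp hy _ hm
      calc (⟪y.fst, g t⟫_ℂ : ℂ) + ⟪y.snd, h t⟫_ℂ = ⟪y, e.symm (g t, h t)⟫_ℂ := rfl
        _ = 0 := this
    rw [hcomp, hgcomm, hhcomm]
    have hic1 : IntervalIntegrable (fun t => (⟪y.fst, g t⟫_ℂ : ℂ)) MeasureTheory.volume a b :=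
      (continuous_const.inner hg).intervalIntegrable a b
    have hic2 : IntervalIntegrable (fun t => (⟪y.snd, h t⟫_ℂ : ℂ)) MeasureTheory.volume a b :=
      (continuous_const.inner hh).intervalIntegrable a b
    rw [← intervalIntegral.integral_add hic1 hic2]
    rw [intervalIntegral.integral_congr (g := fun _ => (0 : ℂ)) hpt]
    simp
  have himg : e.symm p ∈ ⇑e ⁻¹' (M : Set (H × H)) → p ∈ (M : Set (H × H)) := by
    intro hx
    simpa using hx
  -- transfer closure through the homeomorphism
  have : p = e (e.symm p) := (e.apply_symm_apply p).symm
  rw [this]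
  have hcl : closure ((M' : Set E2)) ⊆ ⇑e ⁻¹' closure (M : Set (H × H)) := by
    apply closure_minimal
    · intro x hx
      simp only [Set.mem_preimage]
      apply subset_closure
      simpa [hM'] using hx
    · exact IsClosed.preimage e.continuous isClosed_closure
  exact hcl hq

end S19

namespace S19
variable (A : H →ₗ.[ℂ] H) (U : ℝ → (H →L[ℂ] H))

/-- the smoothed vector `∫_{-ε}^{ε} f(t) U(t)ξ dt`. -/
def Phi (ε : ℝ) (f : ℝ → ℝ) (ξ : H) : H := ∫ t in (-ε)..ε, f t • U t ξ

lemma Phi_lipschitz (hUunit : ∀ (t : ℝ) (ξ η : H), ⟪U t ξ, U t η⟫_ℂ = ⟪ξ, η⟫_ℂ)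
    (hUcont : ∀ ξ : H, Continuous fun t : ℝ => U t ξ)
    {ε : ℝ} (hε : 0 < ε) {f : ℝ → ℝ} (hf : Continuous f) (ξ ζ : H) :
    ‖Phi U ε f ξ - Phi U ε f ζ‖ ≤ (∫ t in (-ε)..ε, |f t|) * ‖ξ - ζ‖ := by
  have hi1 : IntervalIntegrable (fun t => f t • U t ξ) MeasureTheory.volume (-ε) ε :=
    (hf.smul (hUcont ξ)).intervalIntegrable _ _
  have hi2 : IntervalIntegrable (fun t => f t • U t ζ) MeasureTheory.volume (-ε) ε :=
    (hf.smul (hUcont ζ)).intervalIntegrable _ _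
  have hsub : Phi U ε f ξ - Phi U ε f ζ = ∫ t in (-ε)..ε, f t • U t (ξ - ζ) := by
    rw [Phi, Phi, ← intervalIntegral.integral_sub hi1 hi2]
    congr 1; funext t
    rw [← smul_sub, ← (U t).map_sub]
  rw [hsub]
  have hle : ε ≤ ε := le_refl ε
  calc ‖∫ t in (-ε)..ε, f t • U t (ξ - ζ)‖
      ≤ ∫ t in (-ε)..ε, ‖f t • U t (ξ - ζ)‖ := by
        apply intervalIntegral.norm_integral_le_integral_norm (by linarith)
    _ = ∫ t in (-ε)..ε, |f t| * ‖ξ - ζ‖ := by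
        congr 1; funext t
        rw [norm_smul, Real.norm_eq_abs, unorm U hUunit t (ξ - ζ)]
    _ = (∫ t in (-ε)..ε, |f t|) * ‖ξ - ζ‖ := intervalIntegral.integral_mul_const _ _

/-- approximate identity estimate. -/
lemma Phi_approx (hUunit : ∀ (t : ℝ) (ξ η : H), ⟪U t ξ, U t η⟫_ℂ = ⟪ξ, η⟫_ℂ)
    (hUcont : ∀ ξ : H, Continuous fun t : ℝ => U t ξ)
    {ε : ℝ} (hε : 0 < ε) {f : ℝ → ℝ} (hf : Continuous f)
    (hf1 : (∫ t in (-ε)..ε, f t) = 1) {ξ : H} {b : ℝ}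
    (hb : ∀ t ∈ Set.Icc (-ε) ε, f t * ‖U t ξ - ξ‖ ≤ f t * b) (hfpos : ∀ t, 0 ≤ f t) :
    ‖Phi U ε f ξ - ξ‖ ≤ b := by
  have hi1 : IntervalIntegrable (fun t => f t • U t ξ) MeasureTheory.volume (-ε) ε :=
    (hf.smul (hUcont ξ)).intervalIntegrable _ _
  have hi2 : IntervalIntegrable (fun t => f t • ξ) MeasureTheory.volume (-ε) ε :=
    (hf.smul continuous_const).intervalIntegrable _ _
  have hsub : Phi U ε f ξ - ξ = ∫ t in (-ε)..ε, f t • (U t ξ - ξ) := by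
    rw [Phi]
    have heq : (fun t => f t • (U t ξ - ξ)) = fun t => f t • U t ξ - f t • ξ :=
      funext fun t => smul_sub _ _ _
    rw [heq, intervalIntegral.integral_sub hi1 hi2, intervalIntegral.integral_smul_const,
      hf1, one_smul]
  rw [hsub]
  calc ‖∫ t in (-ε)..ε, f t • (U t ξ - ξ)‖
      ≤ ∫ t in (-ε)..ε, ‖f t • (U t ξ - ξ)‖ := by
        apply intervalIntegral.norm_integral_le_integral_norm (by linarith)
    _ ≤ ∫ t in (-ε)..ε, f t * b := by
        apply intervalIntegral.integral_mono_on (by linarith)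
        · exact ((hf.smul ((hUcont ξ).sub continuous_const)).norm).intervalIntegrable _ _
        · exact (hf.mul continuous_const).intervalIntegrable _ _
        · intro t ht
          rw [norm_smul, Real.norm_eq_abs, _root_.abs_of_nonneg (hfpos t)]
          exact hb t ht
    _ = (∫ t in (-ε)..ε, f t) * b := intervalIntegral.integral_mul_const _ _
    _ = b := by rw [hf1, one_mul]

/-- single integration by parts. -/
lemma ibp_one (hUgrp : ∀ s t : ℝ, U (s + t) = (U s).comp (U t))
    (hUcont : ∀ ξ : H, Continuous fun t : ℝ => U t ξ)
    (hgen : ∀ (ξ : H) (hξ : ξ ∈ A.domain),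
      HasDerivAt (fun t : ℝ => U t ξ) (Complex.I • A ⟨ξ, hξ⟩) 0)
    (hgen' : ∀ ξ : H, (∃ d : H, HasDerivAt (fun t : ℝ => U t ξ) d 0) → ξ ∈ A.domain)
    {ε : ℝ} (hε : 0 < ε) {f : ℝ → ℝ} (hf : ContDiff ℝ ∞ f)
    (hfa : f (-ε) = 0) (hfb : f ε = 0) {ξ : H} (hξ : ξ ∈ A.domain) :
    (∫ t in (-ε)..ε, deriv f t • U t ξ)
      = (-Complex.I) • ∫ t in (-ε)..ε, f t • U t (A ⟨ξ, hξ⟩) := by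
  have hfc : Continuous f := hf.continuous
  have hfc' : Continuous (deriv f) := (hf.iterate_deriv 1).continuous
  have hderiv : ∀ t ∈ Set.uIcc (-ε) ε, HasDerivAt (fun s => f s • U s ξ)
      (f t • (Complex.I • U t (A ⟨ξ, hξ⟩)) + deriv f t • U t ξ) t := by
    intro t _
    exact HasDerivAt.smul (𝕜' := ℝ)
      ((hf.differentiable (by simp)).differentiableAt.hasDerivAt)
      (uderiv A U hUgrp hgen hgen' t hξ)
  have hintc : Continuous fun t => f t • (Complex.I • U t (A ⟨ξ, hξ⟩)) + deriv f t • U t ξ := by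
    apply Continuous.add
    · exact hfc.smul ((hUcont _).const_smul _)
    · exact hfc'.smul (hUcont ξ)
  have hftc := intervalIntegral.integral_eq_sub_of_hasDerivAt hderiv
    (hintc.intervalIntegrable _ _)
  rw [hfa, hfb, zero_smul, zero_smul, sub_zero] at hftc
  rw [intervalIntegral.integral_add
    (by exact (hfc.smul ((hUcont _).const_smul _)).intervalIntegrable (-ε) ε :
      IntervalIntegrable (fun t => f t • (Complex.I • U t (A ⟨ξ, hξ⟩))) MeasureTheory.volume (-ε) ε)
    (by exact (hfc'.smul (hUcont ξ)).intervalIntegrable (-ε) ε :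
      IntervalIntegrable (fun t => deriv f t • U t ξ) MeasureTheory.volume (-ε) ε)] at hftc
  have h2 : (∫ t in (-ε)..ε, f t • (Complex.I • U t (A ⟨ξ, hξ⟩)))
      = Complex.I • ∫ t in (-ε)..ε, f t • U t (A ⟨ξ, hξ⟩) := by
    rw [← intervalIntegral.integral_smul]
    congr 1; funext t
    rw [smul_comm]
  rw [h2] at hftc
  have h3 := eq_neg_of_add_eq_zero_right hftc
  rw [h3, neg_smul]

end S19

namespace S19
variable (A : H →ₗ.[ℂ] H) (U : ℝ → (H →L[ℂ] H))

lemma rsmul {M : Type*} [AddCommGroup M] [Module ℂ M] [Module ℝ M] [IsScalarTower ℝ ℂ M]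
    (r : ℝ) (x : M) : r • x = ((r : ℂ)) • x := by
  rw [show ((r : ℂ)) = r • (1 : ℂ) by simp [Complex.real_smul], smul_assoc, one_smul]

lemma tsupport_iter_deriv (f : ℝ → ℝ) : ∀ j : ℕ, tsupport (deriv^[j] f) ⊆ tsupport f
  | 0 => subset_rfl
  | j + 1 => by
      rw [Function.iterate_succ_apply']
      exact subset_trans (closure_minimal support_deriv_subset (isClosed_tsupport _))
        (tsupport_iter_deriv f j)

/-- iterated integration by parts. -/
lemma ibp_iter (hUgrp : ∀ s t : ℝ, U (s + t) = (U s).comp (U t))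
    (hUcont : ∀ ξ : H, Continuous fun t : ℝ => U t ξ)
    (hgen : ∀ (ξ : H) (hξ : ξ ∈ A.domain),
      HasDerivAt (fun t : ℝ => U t ξ) (Complex.I • A ⟨ξ, hξ⟩) 0)
    (hgen' : ∀ ξ : H, (∃ d : H, HasDerivAt (fun t : ℝ => U t ξ) d 0) → ξ ∈ A.domain)
    {ε : ℝ} (hε : 0 < ε) :
    ∀ (k : ℕ) {f : ℝ → ℝ}, ContDiff ℝ ∞ f →
      (∀ j : ℕ, deriv^[j] f (-ε) = 0 ∧ deriv^[j] f ε = 0) →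
      ∀ {ξ η : H}, IterGraph A k ξ η →
      (∫ t in (-ε)..ε, deriv^[k] f t • U t ξ)
        = ((-Complex.I) ^ k) • ∫ t in (-ε)..ε, f t • U t η
  | 0, f, hf, hvan, ξ, η, hg => by
      have : ξ = η := hg
      simp [this]
  | k + 1, f, hf, hvan, ξ, η, hg => by
      obtain ⟨hd, hg'⟩ := hg
      have hstep : (∫ t in (-ε)..ε, deriv^[k + 1] f t • U t ξ)
          = (-Complex.I) • ∫ t in (-ε)..ε, deriv^[k] f t • U t (A ⟨ξ, hd⟩) := by
        have h1 : deriv^[k + 1] f = deriv (deriv^[k] f) := Function.iterate_succ_apply' deriv k f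
        rw [h1]
        exact ibp_one A U hUgrp hUcont hgen hgen' hε (hf.iterate_deriv k)
          (hvan k).1 (hvan k).2 hd
      rw [hstep, ibp_iter hUgrp hUcont hgen hgen' hε k hf hvan hg', smul_smul, ← pow_succ']

end S19


open S19 in
/-- Let `A` be a self-adjoint operator on the Hilbert space `H` and
let `U(t) = e^{itA}` be the strongly continuous one-parameter unitary group generated
by `A`.  Suppose there are `ε > 0` and dense linear subspaces `𝒟_ε, 𝒟` of `H^∞` such
that `U(t)𝒟_ε ⊆ 𝒟` for all `t ∈ (−ε, ε)`.  Then for every positive integer `k`, `𝒟`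
is a core for `A^k`, i.e. the closure of the restriction of `A^k` to `𝒟` equals `A^k`
(stated as an equality of graphs). -/
theorem dense_invariant_subspace_is_core_for_powers
    (A : H →ₗ.[ℂ] H) (hdense : Dense (A.domain : Set H))
    (hsa : A.adjoint = A)
    (U : ℝ → (H →L[ℂ] H))
    (hU0 : U 0 = 1)
    (hUgrp : ∀ s t : ℝ, U (s + t) = (U s).comp (U t))
    (hUunit : ∀ (t : ℝ) (ξ η : H), ⟪U t ξ, U t η⟫_ℂ = ⟪ξ, η⟫_ℂ)
    (hUcont : ∀ ξ : H, Continuous fun t : ℝ => U t ξ)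
    -- `A` is the generator of `U`, i.e. `U(t) = e^{itA}` :
    (hgen : ∀ (ξ : H) (hξ : ξ ∈ A.domain),
      HasDerivAt (fun t : ℝ => U t ξ) (Complex.I • A ⟨ξ, hξ⟩) 0)
    (hgen' : ∀ ξ : H, (∃ d : H, HasDerivAt (fun t : ℝ => U t ξ) d 0) → ξ ∈ A.domain)
    (ε : ℝ) (hε : 0 < ε)
    (Dε D : Submodule ℂ H)
    (hDεsmooth : (Dε : Set H) ⊆ smoothVecs A) (hDsmooth : (D : Set H) ⊆ smoothVecs A)
    (hDεdense : Dense (Dε : Set H)) (hDdense : Dense (D : Set H))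
    (hinv : ∀ t ∈ Set.Ioo (-ε) ε, ∀ ξ ∈ Dε, U t ξ ∈ D) :
    ∀ k : ℕ, 0 < k →
      {p : H × H | IterGraph A k p.1 p.2}
        = closure {p : H × H | p.1 ∈ D ∧ IterGraph A k p.1 p.2} := by
  intro k hk
  set M : Submodule ℂ (H × H) :=
    { carrier := {p : H × H | p.1 ∈ D ∧ IterGraph A k p.1 p.2}
      add_mem' := fun ha hb => ⟨D.add_mem ha.1 hb.1, iterGraph_add A k ha.2 hb.2⟩
      zero_mem' := ⟨D.zero_mem, iterGraph_zero A k⟩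
      smul_mem' := fun c p hp => ⟨D.smul_mem c hp.1, iterGraph_smul A k c hp.2⟩ } with hMdef
  have hMset : {p : H × H | p.1 ∈ D ∧ IterGraph A k p.1 p.2} = (M : Set (H × H)) := rfl
  rw [hMset]
  apply Set.eq_of_subset_of_subset
  · -- graph of A^k is contained in the closure
    rintro ⟨ξ, η⟩ hξη
    simp only [Set.mem_setOf_eq] at hξη
    have key : ∀ r : ℝ, 0 < r → ∃ q ∈ closure (M : Set (H × H)), dist ((ξ, η) : H × H) q < r := by
      intro r hr
      -- choose δ from strong continuity
      obtain ⟨δ1, hδ1pos, hδ1⟩ := Metric.continuous_iff.mp (hUcont ξ) 0 (r/2) (by linarith)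
      obtain ⟨δ2, hδ2pos, hδ2⟩ := Metric.continuous_iff.mp (hUcont η) 0 (r/2) (by linarith)
      set δ : ℝ := min (min δ1 δ2) ε / 2 with hδdef
      have hδpos : 0 < δ := by
        apply div_pos _ (by norm_num)
        exact lt_min (lt_min hδ1pos hδ2pos) hε
      have hδε : δ < ε := by
        have : δ ≤ ε / 2 := by
          apply div_le_div_of_nonneg_right _ (by norm_num)
          exact min_le_right _ _
        linarith
      have hδ1' : δ < δ1 := by
        have h1 : δ ≤ δ1 / 2 := by
          apply div_le_div_of_nonneg_right _ (by norm_num)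
          exact le_trans (min_le_left _ _) (min_le_left _ _)
        linarith
      have hδ2' : δ < δ2 := by
        have h1 : δ ≤ δ2 / 2 := by
          apply div_le_div_of_nonneg_right _ (by norm_num)
          exact le_trans (min_le_left _ _) (min_le_right _ _)
        linarith
      -- the bump function
      set bump : ContDiffBump (0 : ℝ) := ⟨δ/2, δ, by positivity, by linarith⟩ with hbdef
      set f : ℝ → ℝ := bump.normed MeasureTheory.volume with hfdef
      have hsmooth : ContDiff ℝ ∞ f := bump.contDiff_normed
      have hcont : Continuous f := hsmooth.continuous
      have hfpos : ∀ t, 0 ≤ f t := fun t => bump.nonneg_normed t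
      have hsupp : Function.support f = Metric.ball (0:ℝ) δ := bump.support_normed_eq
      have hsupp0 : ∀ t : ℝ, δ ≤ |t| → f t = 0 := by
        intro t ht
        by_contra hne
        have : t ∈ Function.support f := hne
        rw [hsupp, Metric.mem_ball, Real.dist_eq, sub_zero] at this
        linarith
      have hvan : ∀ j : ℕ, deriv^[j] f (-ε) = 0 ∧ deriv^[j] f ε = 0 := by
        intro j
        have hts : tsupport f = Metric.closedBall (0:ℝ) δ := bump.tsupport_normed_eq
        have hmem : ∀ z : ℝ, δ < |z| → deriv^[j] f z = 0 := by
          intro z hz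
          apply image_eq_zero_of_notMem_tsupport
          intro hmem
          have := tsupport_iter_deriv f j hmem
          rw [hts, Metric.mem_closedBall, Real.dist_eq, sub_zero] at this
          linarith
        constructor
        · exact hmem _ (by rw [abs_neg, abs_of_pos hε]; linarith)
        · exact hmem _ (by rw [abs_of_pos hε]; linarith)
      have hint1 : (∫ t in (-ε)..ε, f t) = 1 := by
        rw [intervalIntegral.integral_eq_integral_of_support_subset, bump.integral_normed]
        rw [hsupp]
        intro t ht
        rw [Metric.mem_ball, Real.dist_eq, sub_zero] at ht
        constructor <;> [linarith [neg_abs_le t]; linarith [le_abs_self t]]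
      set g : ℝ → ℝ := deriv^[k] f with hgdef
      have hgcont : Continuous g := (hsmooth.iterate_deriv k).continuous
      -- the smoothed pair lies in the closure of M
      have hsmoothmem : (Phi U ε f ξ, (Complex.I ^ k) • Phi U ε g ξ)
          ∈ closure (M : Set (H × H)) := by
        -- first, for each ζ ∈ Dε
        have hζmem : ∀ ζ : H, ζ ∈ Dε →
            (Phi U ε f ζ, (Complex.I ^ k) • Phi U ε g ζ) ∈ closure (M : Set (H × H)) := by
          intro ζ hζ
          obtain ⟨χ, hχ⟩ := hDεsmooth hζ k
          -- pair of integrals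
          have hpair : (Phi U ε f ζ, Phi U ε f χ) ∈ closure (M : Set (H × H)) := by
            apply pair_mem_closure M (by exact hcont.smul (hUcont ζ) : Continuous fun t => f t • U t ζ)
              (by exact hcont.smul (hUcont χ) : Continuous fun t => f t • U t χ)
            intro t ht
            rw [Set.uIcc_of_le (by linarith)] at ht
            rcases lt_or_ge (|t|) ε with htin | htout
            · have htIoo : t ∈ Set.Ioo (-ε) ε := by
                constructor <;> [linarith [neg_abs_le t]; linarith [le_abs_self t]]
              have hbase : ((U t ζ, U t χ) : H × H) ∈ M :=
                ⟨hinv t htIoo ζ hζ, ucomm_iter A U hUgrp hgen hgen' t k hχ⟩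
              have : ((f t • U t ζ, f t • U t χ) : H × H) = f t • ((U t ζ, U t χ) : H × H) :=
                rfl
              rw [this, rsmul]
              exact M.smul_mem _ hbase
            · have hf0 : f t = 0 := hsupp0 t (by linarith)
              rw [hf0]
              simp only [zero_smul]
              exact M.zero_mem
          -- rewrite the second component via integration by parts
          have hibp := ibp_iter A U hUgrp hUcont hgen hgen' hε k hsmooth hvan hχ
          have hIk : (Complex.I ^ k) * ((-Complex.I) ^ k) = 1 := by
            rw [← mul_pow]
            simp [mul_neg, Complex.I_mul_I]
          have h2 : (Complex.I ^ k) • Phi U ε g ζ = Phi U ε f χ := by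
            rw [hgdef, Phi, hibp, smul_smul, hIk, one_smul]; rfl
          rw [h2]
          exact hpair
        -- pass to the limit along a sequence in Dε
        obtain ⟨ζs, hζs, hζlim⟩ := mem_closure_iff_seq_limit.mp (hDεdense ξ)
        have hC1 : Tendsto (fun m => Phi U ε f (ζs m)) atTop (𝓝 (Phi U ε f ξ)) := by
          rw [tendsto_iff_norm_sub_tendsto_zero]
          apply squeeze_zero (fun m => norm_nonneg _)
            (fun m => Phi_lipschitz U hUunit hUcont hε hcont (ζs m) ξ)
          have := (tendsto_iff_norm_sub_tendsto_zero.mp hζlim).const_mul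
            (∫ t in (-ε)..ε, |f t|)
          simpa using this
        have hC2 : Tendsto (fun m => (Complex.I ^ k) • Phi U ε g (ζs m)) atTop
            (𝓝 ((Complex.I ^ k) • Phi U ε g ξ)) := by
          apply Tendsto.const_smul
          rw [tendsto_iff_norm_sub_tendsto_zero]
          apply squeeze_zero (fun m => norm_nonneg _)
            (fun m => Phi_lipschitz U hUunit hUcont hε hgcont (ζs m) ξ)
          have := (tendsto_iff_norm_sub_tendsto_zero.mp hζlim).const_mul
            (∫ t in (-ε)..ε, |g t|)
          simpa using this
        exact isClosed_closure.mem_of_tendsto (hC1.prodMk_nhds hC2)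
          (Filter.Eventually.of_forall (fun m => hζmem (ζs m) (hζs m)))
      -- identify the second component using IBP for ξ itself
      have hibpξ := ibp_iter A U hUgrp hUcont hgen hgen' hε k hsmooth hvan hξη
      have hIk : (Complex.I ^ k) * ((-Complex.I) ^ k) = 1 := by
        rw [← mul_pow]
        simp [mul_neg, Complex.I_mul_I]
      have h2 : (Complex.I ^ k) • Phi U ε g ξ = Phi U ε f η := by
        rw [hgdef, Phi, hibpξ, smul_smul, hIk, one_smul]; rfl
      rw [h2] at hsmoothmem
      refine ⟨(Phi U ε f ξ, Phi U ε f η), hsmoothmem, ?_⟩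
      -- distance estimate
      have happrox : ∀ (v : H) (δv : ℝ), 0 < δv → δ < δv →
          (∀ t : ℝ, dist t 0 < δv → dist (U t v) (U 0 v) < r/2) →
          ‖Phi U ε f v - v‖ ≤ r/2 := by
        intro v δv hδvpos hδδv hcontv
        apply Phi_approx U hUunit hUcont hε hcont hint1 _ hfpos
        intro t ht
        rcases lt_or_ge (|t|) δ with htin | htout
        · have hdist : dist (U t v) (U 0 v) < r/2 := by
            apply hcontv
            rw [Real.dist_eq, sub_zero]
            linarith
          rw [hU0] at hdist
          have : ‖U t v - v‖ < r / 2 := by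
            rw [← dist_eq_norm]
            simpa using hdist
          exact mul_le_mul_of_nonneg_left this.le (hfpos t)
        · rw [hsupp0 t htout, zero_mul, zero_mul]
      have hd1 : ‖Phi U ε f ξ - ξ‖ ≤ r/2 := happrox ξ δ1 hδ1pos hδ1' hδ1
      have hd2 : ‖Phi U ε f η - η‖ ≤ r/2 := happrox η δ2 hδ2pos hδ2' hδ2
      rw [Prod.dist_eq]
      apply max_lt
      · rw [dist_eq_norm, norm_sub_rev]; linarith
      · rw [dist_eq_norm, norm_sub_rev]; linarith
    have := Metric.mem_closure_iff.mpr key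
    rwa [closure_closure] at this
  · -- the closure is contained in the graph, by closedness
    apply closure_minimal
    · intro p hp
      exact hp.2
    · exact iterGraph_isClosed A hdense hsa k
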